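/- arXiv:1501.02901 — 2 statements merged into one kernel-verified Lean document; each statement's English description precedes it below -/
import Mathlib

section
/- Let 0 ≤ α < ω₁ and let f : X → Y and g : X → Z have σ-sfd bases consisting of functionally ambiguous sets of class α. Then the mapping h : X → Y × Z, h(x) = (f(x), g(x)), has a σ-sfd base consisting of functionally ambiguous sets of class α. (In particular, the families of pairwise intersections of members of the two bases form such a base for h.) -/
open Set Topology Ordinal

/-- A family of sets is discrete if every point has an open neighborhood
meeting at most one member of the family. -/
def DiscreteFam {X I : Type*} [TopologicalSpace X] (U : I → Set X) : Prop :=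
  ∀ x : X, ∃ V : Set X, IsOpen V ∧ x ∈ V ∧
    ∀ i j : I, (V ∩ U i).Nonempty → (V ∩ U j).Nonempty → i = j

/-- A set is functionally closed (a zero set) if it is the preimage of `{0}`
under a continuous real-valued function. -/
def FunClosed {X : Type*} [TopologicalSpace X] (F : Set X) : Prop :=
  ∃ f : X → ℝ, Continuous f ∧ F = f ⁻¹' {0}

/-- A set is functionally open if its complement is functionally closed. -/
def FunOpen {X : Type*} [TopologicalSpace X] (U : Set X) : Prop :=
  FunClosed Uᶜ

/-- The pair (α'th functionally multiplicative class, α'th functionally additive class),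
defined by transfinite recursion. -/
noncomputable def FunClassPair (X : Type*) [TopologicalSpace X] (α : Ordinal) :
    Set (Set X) × Set (Set X) :=
  if α = 0 then ({F | FunClosed F}, {U | FunOpen U})
  else
    ({ A | ∃ f : ℕ → Set X, (∀ n, ∃ β, ∃ _ : β < α, f n ∈ (FunClassPair X β).2) ∧ A = ⋂ n, f n },
     { A | ∃ f : ℕ → Set X, (∀ n, ∃ β, ∃ _ : β < α, f n ∈ (FunClassPair X β).1) ∧ A = ⋃ n, f n })
termination_by α

/-- The α'th functionally multiplicative class. -/
noncomputable def FunMul (X : Type*) [TopologicalSpace X] (α : Ordinal) : Set (Set X) :=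
  (FunClassPair X α).1

/-- The α'th functionally additive class. -/
noncomputable def FunAdd (X : Type*) [TopologicalSpace X] (α : Ordinal) : Set (Set X) :=
  (FunClassPair X α).2

/-- Functionally ambiguous sets of class α. -/
noncomputable def FunAmb {X : Type*} [TopologicalSpace X] (α : Ordinal) (A : Set X) : Prop :=
  A ∈ FunAdd X α ∧ A ∈ FunMul X α

/-- A family is strongly functionally discrete (sfd). -/
def SFDFam {X I : Type*} [TopologicalSpace X] (A : I → Set X) : Prop :=
  ∃ U : I → Set X, DiscreteFam U ∧ (∀ i, FunOpen (U i)) ∧ ∀ i, closure (A i) ⊆ U i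

/-- A collection of sets is sfd (viewed as a family indexed by itself). -/
def SFDSet {X : Type*} [TopologicalSpace X] (𝒜 : Set (Set X)) : Prop :=
  SFDFam (fun b : 𝒜 => (b : Set X))

/-- A collection of sets is a well sfd-family. -/
def WellSFDSet {X : Type*} [TopologicalSpace X] (𝒜 : Set (Set X)) : Prop :=
  ∃ U F : 𝒜 → Set X, DiscreteFam U ∧ DiscreteFam F ∧
    (∀ b, FunOpen (U b)) ∧ (∀ b, FunClosed (F b)) ∧
    ∀ b : 𝒜, (b : Set X) ⊆ F b ∧ F b ⊆ U b

/-- An indexed family is σ-sfd if the index set splits into countably many pieces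
on each of which the family is sfd. -/
def SigmaSFDFam {X I : Type*} [TopologicalSpace X] (A : I → Set X) : Prop :=
  ∃ J : ℕ → Set I, (∀ n, SFDFam (fun i : J n => A i)) ∧ (⋃ n, J n) = Set.univ

/-- `B` is a base for the mapping `f`: every preimage of an open set is a union
of members of `B`. -/
def IsBaseFor {X Y : Type*} [TopologicalSpace X] [TopologicalSpace Y]
    (B : Set (Set X)) (f : X → Y) : Prop :=
  ∀ V : Set Y, IsOpen V → ∃ S ⊆ B, f ⁻¹' V = ⋃₀ S

/-- `f` has a σ-strongly-functionally-discrete base. -/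
def SigmaSFD {X Y : Type*} [TopologicalSpace X] [TopologicalSpace Y] (f : X → Y) : Prop :=
  ∃ B : ℕ → Set (Set X), (∀ n, SFDSet (B n)) ∧ IsBaseFor (⋃ n, B n) f

/-- `f` has a σ-sfd base consisting of functionally ambiguous sets of class α. -/
noncomputable def SigmaSFDAmb {X Y : Type*} [TopologicalSpace X] [TopologicalSpace Y]
    (α : Ordinal) (f : X → Y) : Prop :=
  ∃ B : ℕ → Set (Set X), (∀ n, SFDSet (B n)) ∧ (∀ n, ∀ b ∈ B n, FunAmb α b) ∧
    IsBaseFor (⋃ n, B n) f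

/-- `f` belongs to the α'th functionally Lebesgue class. -/
noncomputable def LebClass {X Y : Type*} [TopologicalSpace X] [TopologicalSpace Y]
    (α : Ordinal) (f : X → Y) : Prop :=
  ∀ V : Set Y, IsOpen V → f ⁻¹' V ∈ FunAdd X α

/-- `Y` has a σ-disjoint base. -/
def SigmaDisjointBase (Y : Type*) [TopologicalSpace Y] : Prop :=
  ∃ V : ℕ → Set (Set Y), (∀ m, (V m).PairwiseDisjoint id) ∧
    TopologicalSpace.IsTopologicalBasis (⋃ m, V m)

/-!
Both functional classes of a fixed level are closed under finite intersections (transfinite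
induction; two countable families are merged into one through `Nat.unpair`), and the pairwise
intersections of two sfd families are sfd, witnessed by the pairwise intersections of the
discrete functionally open neighbourhoods. If `B` and `C` are bases for `f` and `g`, the sets
`b ∩ c` form a base for `x ↦ (f x, g x)`, since every open set of `Y × Z` is a union of open
rectangles `V ×ˢ W`, and `(f, g)⁻¹(V ×ˢ W) = f⁻¹ V ∩ g⁻¹ W`.
-/

open scoped SetFamily

lemma iInter_unpair_inter {X : Type*} (u v : ℕ → Set X) :
    ⋂ k : ℕ, u k.unpair.1 ∩ v k.unpair.2 = (⋂ n, u n) ∩ ⋂ n, v n := by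
  rw [iInter_unpair (fun i j => u i ∩ v j)]
  ext x
  simp only [mem_iInter, mem_inter_iff]
  exact ⟨fun h => ⟨fun i => (h i 0).1, fun j => (h 0 j).2⟩, fun h i j => ⟨h.1 i, h.2 j⟩⟩

lemma iUnion_unpair_inter {X : Type*} (u v : ℕ → Set X) :
    ⋃ k : ℕ, u k.unpair.1 ∩ v k.unpair.2 = (⋃ n, u n) ∩ ⋃ n, v n := by
  rw [iUnion_unpair (fun i j => u i ∩ v j), iUnion_inter_iUnion]

lemma iUnion_unpair_infs {X : Type*} (B C : ℕ → Set (Set X)) :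
    ⋃ k : ℕ, B k.unpair.1 ⊼ C k.unpair.2 = (⋃ n, B n) ⊼ ⋃ n, C n := by
  rw [iUnion_unpair (fun i j => B i ⊼ C j)]
  simp only [HasInfs.infs, image2_iUnion_left, image2_iUnion_right]
  exact iUnion_comm _

lemma exists_lt_inter_unpair_mem {X : Type*} {C : Ordinal → Set (Set X)} (hC : Monotone C)
    {α : Ordinal} (hinter : ∀ β < α, ∀ A ∈ C β, ∀ B ∈ C β, A ∩ B ∈ C β) {u v : ℕ → Set X}
    (hu : ∀ n, ∃ β, ∃ _ : β < α, u n ∈ C β) (hv : ∀ n, ∃ β, ∃ _ : β < α, v n ∈ C β) (k : ℕ) :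
    ∃ β, ∃ _ : β < α, u k.unpair.1 ∩ v k.unpair.2 ∈ C β := by
  obtain ⟨β₁, hβ₁, hu₁⟩ := hu k.unpair.1
  obtain ⟨β₂, hβ₂, hv₂⟩ := hv k.unpair.2
  exact ⟨max β₁ β₂, max_lt hβ₁ hβ₂, hinter _ (max_lt hβ₁ hβ₂) _
    (hC (le_max_left _ _) hu₁) _ (hC (le_max_right _ _) hv₂)⟩

section FunctionalClasses

variable {X : Type*} [TopologicalSpace X]

lemma FunClosed.inter {A B : Set X} (hA : FunClosed A) (hB : FunClosed B) :
    FunClosed (A ∩ B) := by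
  obtain ⟨f, hf, rfl⟩ := hA
  obtain ⟨g, hg, rfl⟩ := hB
  refine ⟨fun x => |f x| + |g x|, by fun_prop, ?_⟩
  ext x
  simp [add_eq_zero_iff_of_nonneg (abs_nonneg (f x)) (abs_nonneg (g x))]

lemma FunClosed.union {A B : Set X} (hA : FunClosed A) (hB : FunClosed B) :
    FunClosed (A ∪ B) := by
  obtain ⟨f, hf, rfl⟩ := hA
  obtain ⟨g, hg, rfl⟩ := hB
  exact ⟨fun x => f x * g x, by fun_prop, by ext x; simp⟩

lemma FunOpen.inter {A B : Set X} (hA : FunOpen A) (hB : FunOpen B) :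
    FunOpen (A ∩ B) := by
  rw [FunOpen, compl_inter]
  exact hA.union hB

lemma FunClosed.exists_eq_iInter_funOpen {A : Set X} (hA : FunClosed A) :
    ∃ U : ℕ → Set X, (∀ n, FunOpen (U n)) ∧ A = ⋂ n, U n := by
  obtain ⟨f, hf, rfl⟩ := hA
  refine ⟨fun n => {x | |f x| < 1 / (n + 1)}, fun n => ?_, ?_⟩
  · refine ⟨fun x => max (1 / (n + 1) - |f x|) 0, by fun_prop, ?_⟩
    ext x
    simp only [mem_compl_iff, mem_ofPred_eq, not_lt, mem_preimage, mem_singleton_iff]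
    rw [max_eq_right_iff, sub_nonpos]
  · ext x
    simp only [mem_preimage, mem_singleton_iff, mem_iInter, mem_ofPred_eq]
    refine ⟨fun h n => by rw [h, abs_zero]; positivity, fun h => ?_⟩
    by_contra hne
    obtain ⟨n, hn⟩ := exists_nat_one_div_lt (abs_pos.2 hne)
    exact (h n).not_gt hn

lemma FunOpen.exists_eq_iUnion_funClosed {A : Set X} (hA : FunOpen A) :
    ∃ F : ℕ → Set X, (∀ n, FunClosed (F n)) ∧ A = ⋃ n, F n := by
  obtain ⟨U, hU, hEq⟩ := FunClosed.exists_eq_iInter_funOpen hA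
  exact ⟨fun n => (U n)ᶜ, hU, by rw [← compl_iInter, ← hEq, compl_compl]⟩

lemma mem_funMul_zero {A : Set X} : A ∈ FunMul X 0 ↔ FunClosed A := by
  rw [FunMul, FunClassPair, if_pos rfl]; rfl

lemma mem_funAdd_zero {A : Set X} : A ∈ FunAdd X 0 ↔ FunOpen A := by
  rw [FunAdd, FunClassPair, if_pos rfl]; rfl

lemma funMul_of_ne_zero {α : Ordinal} (hα : α ≠ 0) :
    FunMul X α = {A | ∃ u : ℕ → Set X,
      (∀ n, ∃ β, ∃ _ : β < α, u n ∈ FunAdd X β) ∧ A = ⋂ n, u n} := by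
  rw [FunMul, FunClassPair, if_neg hα]; rfl

lemma funAdd_of_ne_zero {α : Ordinal} (hα : α ≠ 0) :
    FunAdd X α = {A | ∃ u : ℕ → Set X,
      (∀ n, ∃ β, ∃ _ : β < α, u n ∈ FunMul X β) ∧ A = ⋃ n, u n} := by
  rw [FunAdd, FunClassPair, if_neg hα]; rfl

lemma funMul_monotone : Monotone (FunMul X) := by
  intro β γ hβγ A hA
  rcases hβγ.lt_or_eq with hlt | rfl
  · rw [funMul_of_ne_zero hlt.ne_bot]
    rcases eq_or_ne β 0 with rfl | hβ
    · obtain ⟨U, hU, hEq⟩ := (mem_funMul_zero.1 hA).exists_eq_iInter_funOpen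
      exact ⟨U, fun n => ⟨0, hlt, mem_funAdd_zero.2 (hU n)⟩, hEq⟩
    · rw [funMul_of_ne_zero hβ] at hA
      obtain ⟨u, hu, rfl⟩ := hA
      refine ⟨u, fun n => ?_, rfl⟩
      obtain ⟨δ, hδ, hm⟩ := hu n
      exact ⟨δ, hδ.trans hlt, hm⟩
  · exact hA

lemma funAdd_monotone : Monotone (FunAdd X) := by
  intro β γ hβγ A hA
  rcases hβγ.lt_or_eq with hlt | rfl
  · rw [funAdd_of_ne_zero hlt.ne_bot]
    rcases eq_or_ne β 0 with rfl | hβ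
    · obtain ⟨F, hF, hEq⟩ := (mem_funAdd_zero.1 hA).exists_eq_iUnion_funClosed
      exact ⟨F, fun n => ⟨0, hlt, mem_funMul_zero.2 (hF n)⟩, hEq⟩
    · rw [funAdd_of_ne_zero hβ] at hA
      obtain ⟨u, hu, rfl⟩ := hA
      refine ⟨u, fun n => ?_, rfl⟩
      obtain ⟨δ, hδ, hm⟩ := hu n
      exact ⟨δ, hδ.trans hlt, hm⟩
  · exact hA

lemma inter_mem_funMul_and_inter_mem_funAdd (α : Ordinal) :
    (∀ A ∈ FunMul X α, ∀ B ∈ FunMul X α, A ∩ B ∈ FunMul X α) ∧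
    (∀ A ∈ FunAdd X α, ∀ B ∈ FunAdd X α, A ∩ B ∈ FunAdd X α) := by
  induction α using WellFoundedLT.induction with
  | _ α IH =>
    rcases eq_or_ne α 0 with rfl | hα
    · simp only [mem_funMul_zero, mem_funAdd_zero]
      exact ⟨fun A hA B hB => hA.inter hB, fun A hA B hB => hA.inter hB⟩
    rw [funMul_of_ne_zero hα, funAdd_of_ne_zero hα]
    constructor
    · rintro _ ⟨u, hu, rfl⟩ _ ⟨v, hv, rfl⟩
      exact ⟨_, exists_lt_inter_unpair_mem funAdd_monotone (fun β hβ => (IH β hβ).2) hu hv,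
        (iInter_unpair_inter u v).symm⟩
    · rintro _ ⟨u, hu, rfl⟩ _ ⟨v, hv, rfl⟩
      exact ⟨_, exists_lt_inter_unpair_mem funMul_monotone (fun β hβ => (IH β hβ).1) hu hv,
        (iUnion_unpair_inter u v).symm⟩

lemma FunAmb.inter {α : Ordinal} {A B : Set X} (hA : FunAmb α A) (hB : FunAmb α B) :
    FunAmb α (A ∩ B) :=
  ⟨(inter_mem_funMul_and_inter_mem_funAdd α).2 A hA.1 B hB.1,
   (inter_mem_funMul_and_inter_mem_funAdd α).1 A hA.2 B hB.2⟩

end FunctionalClasses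

section Discrete

variable {X : Type*} [TopologicalSpace X]

lemma DiscreteFam.inter_comp {I J K : Type*} {U : I → Set X} {V : J → Set X}
    (hU : DiscreteFam U) (hV : DiscreteFam V) {p : K → I} {q : K → J}
    (hpq : Function.Injective fun k => (p k, q k)) :
    DiscreteFam fun k => U (p k) ∩ V (q k) := by
  intro x
  obtain ⟨N₁, hN₁, hxN₁, h₁⟩ := hU x
  obtain ⟨N₂, hN₂, hxN₂, h₂⟩ := hV x
  refine ⟨N₁ ∩ N₂, hN₁.inter hN₂, ⟨hxN₁, hxN₂⟩, fun i j ⟨y, hy⟩ ⟨z, hz⟩ => hpq ?_⟩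
  exact Prod.ext (h₁ _ _ ⟨y, hy.1.1, hy.2.1⟩ ⟨z, hz.1.1, hz.2.1⟩)
    (h₂ _ _ ⟨y, hy.1.2, hy.2.2⟩ ⟨z, hz.1.2, hz.2.2⟩)

lemma SFDSet.infs {𝒜 ℬ : Set (Set X)} (h𝒜 : SFDSet 𝒜) (hℬ : SFDSet ℬ) : SFDSet (𝒜 ⊼ ℬ) := by
  obtain ⟨U, hUd, hUo, hUc⟩ := h𝒜
  obtain ⟨V, hVd, hVo, hVc⟩ := hℬ
  have hsplit : ∀ d : ↥(𝒜 ⊼ ℬ), ∃ a : 𝒜, ∃ b : ℬ, (d : Set X) = (a : Set X) ∩ b := by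
    rintro ⟨_, a, ha, b, hb, rfl⟩
    exact ⟨⟨a, ha⟩, ⟨b, hb⟩, rfl⟩
  choose p q hpq using hsplit
  refine ⟨fun d => U (p d) ∩ V (q d), hUd.inter_comp hVd fun d e hde => ?_,
    fun d => (hUo _).inter (hVo _), fun d => ?_⟩
  · simp only [Prod.mk.injEq] at hde
    rw [Subtype.ext_iff, hpq d, hpq e, hde.1, hde.2]
  · show closure (d : Set X) ⊆ _
    rw [hpq d]
    exact (closure_inter_subset_inter_closure _ _).trans
      (inter_subset_inter (hUc _) (hVc _))

end Discrete

lemma IsBaseFor.infs {X Y Z : Type*} [TopologicalSpace X] [TopologicalSpace Y]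
    [TopologicalSpace Z] {B C : Set (Set X)} {f : X → Y} {g : X → Z}
    (hf : IsBaseFor B f) (hg : IsBaseFor C g) : IsBaseFor (B ⊼ C) fun x => (f x, g x) := by
  intro O hO
  refine ⟨{d | d ∈ B ⊼ C ∧ d ⊆ (fun x => (f x, g x)) ⁻¹' O}, fun d hd => hd.1,
    Subset.antisymm (fun x hx => ?_) (sUnion_subset fun d hd => hd.2)⟩
  obtain ⟨V, W, hV, hW, hfx, hgx, hVW⟩ := isOpen_prod_iff.1 hO (f x) (g x) hx
  obtain ⟨S, hSB, hS⟩ := hf V hV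
  obtain ⟨T, hTC, hT⟩ := hg W hW
  obtain ⟨b, hbS, hxb⟩ : x ∈ ⋃₀ S := hS ▸ hfx
  obtain ⟨c, hcT, hxc⟩ : x ∈ ⋃₀ T := hT ▸ hgx
  refine ⟨b ∩ c, ⟨inf_mem_infs (hSB hbS) (hTC hcT), fun z hz => hVW ⟨?_, ?_⟩⟩, hxb, hxc⟩
  · exact (hS.symm ▸ ⟨b, hbS, hz.1⟩ : z ∈ f ⁻¹' V)
  · exact (hT.symm ▸ ⟨c, hcT, hz.2⟩ : z ∈ g ⁻¹' W)

theorem stmt9_general {X Y Z : Type*} [TopologicalSpace X] [TopologicalSpace Y] [TopologicalSpace Z]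
    (α : Ordinal)
    (f : X → Y) (g : X → Z) (hf : SigmaSFDAmb α f) (hg : SigmaSFDAmb α g) :
    SigmaSFDAmb α (fun x => (f x, g x)) := by
  obtain ⟨B, hBsfd, hBamb, hB⟩ := hf
  obtain ⟨C, hCsfd, hCamb, hC⟩ := hg
  refine ⟨fun k => B k.unpair.1 ⊼ C k.unpair.2, fun k => (hBsfd _).infs (hCsfd _),
    fun k => forall_infs_iff.2 fun b hb c hc => (hBamb _ b hb).inter (hCamb _ c hc), ?_⟩
  rw [iUnion_unpair_infs]
  exact hB.infs hC

theorem stmt9 {X Y Z : Type*} [TopologicalSpace X] [TopologicalSpace Y] [TopologicalSpace Z]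
    (α : Ordinal) (hα : α < ω₁)
    (f : X → Y) (g : X → Z) (hf : SigmaSFDAmb α f) (hg : SigmaSFDAmb α g) :
    SigmaSFDAmb α (fun x => (f x, g x)) :=
  stmt9_general α f g hf hg
end

section
/- Let 0 < α < ω₁ and let X be a topological space. For any disjoint sets A, B ⊆ X of the α'th functionally multiplicative class there exists a functionally ambiguous set C of class α with A ⊆ C ⊆ X \ B. -/
open Set Topology Ordinal

/-!
Since `A` and `B` are disjoint, `X = Aᶜ ∪ Bᶜ`, and both complements are countable unions of sets
of lower multiplicative class, hence of ambiguous sets of class `α`. Interleave these two sequences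
into one cover `E` of `X` and make it disjoint: each `disjointed E n` is a finite Boolean
combination of ambiguous sets, hence ambiguous. The union `C` of the pieces coming from `Bᶜ` and
its complement, the union of the pieces coming from `Aᶜ`, are then both of additive class `α`.
-/

section FunctionalClasses

variable {X : Type*} [TopologicalSpace X] {α β : Ordinal} {A B F G : Set X}

lemma funMul_zero : FunMul X 0 = {F | FunClosed F} := by
  rw [FunMul, FunClassPair, if_pos rfl]

lemma funAdd_zero : FunAdd X 0 = {U | FunOpen U} := by
  rw [FunAdd, FunClassPair, if_pos rfl]

lemma mem_funMul_iff (hα : α ≠ 0) :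
    A ∈ FunMul X α ↔ ∃ f : ℕ → Set X, (∀ n, ∃ β < α, f n ∈ FunAdd X β) ∧ A = ⋂ n, f n := by
  rw [FunMul, FunClassPair, if_neg hα]
  simp only [exists_prop, FunAdd]
  rfl

lemma mem_funAdd_iff (hα : α ≠ 0) :
    A ∈ FunAdd X α ↔ ∃ f : ℕ → Set X, (∀ n, ∃ β < α, f n ∈ FunMul X β) ∧ A = ⋃ n, f n := by
  rw [FunAdd, FunClassPair, if_neg hα]
  simp only [exists_prop, FunMul]
  rfl

lemma funMul_funAdd_compl_duality (α : Ordinal) (A : Set X) :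
    (A ∈ FunMul X α → Aᶜ ∈ FunAdd X α) ∧ (A ∈ FunAdd X α → Aᶜ ∈ FunMul X α) := by
  induction α using WellFoundedLT.induction generalizing A with
  | _ α IH =>
    rcases eq_or_ne α 0 with rfl | hα
    · simp only [funMul_zero, funAdd_zero, mem_ofPred_eq, FunOpen, compl_compl]
      exact ⟨id, id⟩
    rw [mem_funMul_iff hα, mem_funAdd_iff hα, mem_funMul_iff hα, mem_funAdd_iff hα]
    constructor
    · rintro ⟨f, hf, rfl⟩
      refine ⟨fun n => (f n)ᶜ, fun n => ?_, compl_iInter f⟩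
      obtain ⟨β, hβ, hfn⟩ := hf n
      exact ⟨β, hβ, (IH β hβ _).2 hfn⟩
    · rintro ⟨f, hf, rfl⟩
      refine ⟨fun n => (f n)ᶜ, fun n => ?_, compl_iUnion f⟩
      obtain ⟨β, hβ, hfn⟩ := hf n
      exact ⟨β, hβ, (IH β hβ _).1 hfn⟩

lemma compl_mem_funAdd_iff : Aᶜ ∈ FunAdd X α ↔ A ∈ FunMul X α :=
  ⟨fun h => compl_compl A ▸ (funMul_funAdd_compl_duality α Aᶜ).2 h,
    (funMul_funAdd_compl_duality α A).1⟩

lemma compl_mem_funMul_iff : Aᶜ ∈ FunMul X α ↔ A ∈ FunAdd X α :=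
  ⟨fun h => compl_compl A ▸ (funMul_funAdd_compl_duality α Aᶜ).1 h,
    (funMul_funAdd_compl_duality α A).2⟩

lemma funClosed_preimage {Y : Type*} [PseudoMetricSpace Y] {f : X → Y} (hf : Continuous f)
    {K : Set Y} (hK : IsClosed K) : FunClosed (f ⁻¹' K) := by
  rcases K.eq_empty_or_nonempty with rfl | hne
  · exact ⟨fun _ => 1, continuous_const, by simp⟩
  · refine ⟨fun x => Metric.infDist (f x) K, (Metric.continuous_infDist_pt K).comp hf, ?_⟩
    ext x
    simp [hK.mem_iff_infDist_zero hne]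

lemma funOpen_preimage {Y : Type*} [PseudoMetricSpace Y] {f : X → Y} (hf : Continuous f)
    {W : Set Y} (hW : IsOpen W) : FunOpen (f ⁻¹' W) :=
  funClosed_preimage hf hW.isClosed_compl

lemma funClosed_inter (hF : FunClosed F) (hG : FunClosed G) : FunClosed (F ∩ G) := by
  obtain ⟨f, hf, rfl⟩ := hF
  obtain ⟨g, hg, rfl⟩ := hG
  have h : f ⁻¹' {0} ∩ g ⁻¹' {0} = (fun x => (f x, g x)) ⁻¹' {(0, 0)} := by
    ext x
    simp [Prod.ext_iff]
  rw [h]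
  exact funClosed_preimage (hf.prodMk hg) isClosed_singleton

lemma funClosed_mem_funMul (hF : FunClosed F) (α : Ordinal) : F ∈ FunMul X α := by
  rcases eq_or_ne α 0 with rfl | hα
  · rwa [funMul_zero]
  obtain ⟨f, hf, rfl⟩ := hF
  have hzero := biInter_basis_nhds (Metric.nhds_basis_ball_inv_nat_succ (x := (0 : ℝ)))
  simp only [iInter_true] at hzero
  rw [mem_funMul_iff hα, ← hzero, preimage_iInter]
  refine ⟨_, fun n => ⟨0, pos_iff_ne_zero.2 hα, ?_⟩, rfl⟩
  rw [funAdd_zero]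
  exact funOpen_preimage hf Metric.isOpen_ball

lemma empty_mem_funAdd : (∅ : Set X) ∈ FunAdd X α := by
  rw [← compl_mem_funMul_iff, compl_empty]
  exact funClosed_mem_funMul ⟨fun _ => 0, continuous_const, (preimage_const_of_mem rfl).symm⟩ α

lemma funMul_mono (hβα : β ≤ α) : FunMul X β ⊆ FunMul X α := by
  intro A hA
  rcases eq_or_ne β 0 with rfl | hβ
  · rw [funMul_zero] at hA
    exact funClosed_mem_funMul hA α
  obtain ⟨f, hf, rfl⟩ := (mem_funMul_iff hβ).1 hA
  refine (mem_funMul_iff (ne_bot_of_le_ne_bot hβ hβα)).2 ⟨f, fun n => ?_, rfl⟩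
  obtain ⟨γ, hγ, hfn⟩ := hf n
  exact ⟨γ, hγ.trans_le hβα, hfn⟩

lemma mem_funAdd_of_mem_funMul_of_lt (hβα : β < α) (hA : A ∈ FunMul X β) : A ∈ FunAdd X α :=
  (mem_funAdd_iff (pos_of_gt hβα).ne').2
    ⟨fun _ => A, fun _ => ⟨β, hβα, hA⟩, (iUnion_const A).symm⟩

lemma iUnion_mem_funAdd {ι : Type*} [Countable ι] (hα : α ≠ 0) {A : ι → Set X}
    (h : ∀ i, A i ∈ FunAdd X α) : ⋃ i, A i ∈ FunAdd X α := by
  cases isEmpty_or_nonempty ι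
  · rw [iUnion_of_empty]
    exact empty_mem_funAdd
  obtain ⟨e, he⟩ := exists_surjective_nat ι
  simp only [mem_funAdd_iff hα] at h ⊢
  choose f hf hA using h
  refine ⟨fun k => f (e k.unpair.1) k.unpair.2, fun k => hf _ _, ?_⟩
  rw [iUnion_unpair (fun i j => f (e i) j), ← he.iUnion_comp]
  exact iUnion_congr fun n => hA (e n)

lemma iInter_mem_funMul {ι : Type*} [Countable ι] (hα : α ≠ 0) {A : ι → Set X}
    (h : ∀ i, A i ∈ FunMul X α) : ⋂ i, A i ∈ FunMul X α := by
  rw [← compl_mem_funAdd_iff, compl_iInter]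
  exact iUnion_mem_funAdd hα fun i => compl_mem_funAdd_iff.2 (h i)

lemma inter_mem_funMul (hA : A ∈ FunMul X α) (hB : B ∈ FunMul X α) : A ∩ B ∈ FunMul X α := by
  rcases eq_or_ne α 0 with rfl | hα
  · rw [funMul_zero] at *
    exact funClosed_inter hA hB
  · rw [inter_eq_iInter]
    exact iInter_mem_funMul hα (Bool.forall_bool.2 ⟨hB, hA⟩)

lemma inter_mem_funAdd (hα : α ≠ 0) (hA : A ∈ FunAdd X α) (hB : B ∈ FunAdd X α) :
    A ∩ B ∈ FunAdd X α := by
  obtain ⟨f, hf, rfl⟩ := (mem_funAdd_iff hα).1 hA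
  obtain ⟨g, hg, rfl⟩ := (mem_funAdd_iff hα).1 hB
  rw [iUnion_inter_iUnion]
  refine iUnion_mem_funAdd hα fun n => iUnion_mem_funAdd hα fun m => ?_
  obtain ⟨β, hβ, hfn⟩ := hf n
  obtain ⟨γ, hγ, hgm⟩ := hg m
  exact mem_funAdd_of_mem_funMul_of_lt (max_lt hβ hγ)
    (inter_mem_funMul (funMul_mono (le_max_left _ _) hfn) (funMul_mono (le_max_right _ _) hgm))

end FunctionalClasses

lemma compl_biUnion_of_pairwise_disjoint {Ω ι : Type*} {f : ι → Set Ω}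
    (hd : Pairwise fun i j => Disjoint (f i) (f j)) (hcov : ⋃ i, f i = Set.univ) (I : Set ι) :
    (⋃ i ∈ I, f i)ᶜ = ⋃ i ∈ Iᶜ, f i := by
  ext x
  obtain ⟨i, hi⟩ := mem_iUnion.1 (hcov ▸ mem_univ x)
  have hmem : ∀ j, x ∈ f j ↔ j = i := fun j =>
    ⟨fun hj => hd.eq (not_disjoint_iff.2 ⟨x, hj, hi⟩), fun h => h ▸ hi⟩
  simp only [mem_compl_iff, mem_iUnion, hmem, exists_prop, exists_eq_right]

namespace FunAmb

variable {X : Type*} [TopologicalSpace X] {α β : Ordinal} {A B : Set X}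

lemma of_mem_funMul_of_lt (hβα : β < α) (hA : A ∈ FunMul X β) : FunAmb α A :=
  ⟨mem_funAdd_of_mem_funMul_of_lt hβα hA, funMul_mono hβα.le hA⟩

lemma compl (hA : FunAmb α A) : FunAmb α Aᶜ :=
  ⟨compl_mem_funAdd_iff.2 hA.2, compl_mem_funMul_iff.2 hA.1⟩

lemma diff (hα : α ≠ 0) (hA : FunAmb α A) (hB : FunAmb α B) : FunAmb α (A \ B) :=
  ⟨inter_mem_funAdd hα hA.1 hB.compl.1, inter_mem_funMul hA.2 hB.compl.2⟩

lemma disjointed (hα : α ≠ 0) {E : ℕ → Set X} (hE : ∀ n, FunAmb α (E n)) (n : ℕ) :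
    FunAmb α (disjointed E n) :=
  disjointedRec (fun _ i ht => ht.diff hα (hE i)) (hE n)

end FunAmb

section Reduction

variable {X : Type*} [TopologicalSpace X] {α : Ordinal} {U V : Set X}

lemma exists_funAmb_seq_of_mem_funAdd (hα : α ≠ 0) (hU : U ∈ FunAdd X α) :
    ∃ P : ℕ → Set X, (∀ n, FunAmb α (P n)) ∧ U = ⋃ n, P n := by
  obtain ⟨P, hP, rfl⟩ := (mem_funAdd_iff hα).1 hU
  refine ⟨P, fun n => ?_, rfl⟩
  obtain ⟨β, hβ, hPn⟩ := hP n
  exact FunAmb.of_mem_funMul_of_lt hβ hPn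

lemma exists_funAmb_of_iUnion_eq_univ (hα : α ≠ 0) {E : ℕ → Set X}
    (hE : ∀ n, FunAmb α (E n)) (hcov : ⋃ n, E n = Set.univ) (I : Set ℕ) :
    ∃ C, FunAmb α C ∧ C ⊆ ⋃ n ∈ I, E n ∧ Cᶜ ⊆ ⋃ n ∈ Iᶜ, E n := by
  have hunion : ∀ J : Set ℕ, ⋃ n ∈ J, disjointed E n ∈ FunAdd X α := fun J => by
    rw [biUnion_eq_iUnion]
    exact iUnion_mem_funAdd hα fun n => (FunAmb.disjointed hα hE n).1
  have hcompl := compl_biUnion_of_pairwise_disjoint (disjoint_disjointed E)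
    (iUnion_disjointed.trans hcov) I
  refine ⟨⋃ n ∈ I, disjointed E n, ⟨hunion I, ?_⟩,
    biUnion_mono subset_rfl fun n _ => disjointed_subset E n, ?_⟩
  · rw [← compl_mem_funAdd_iff, hcompl]
    exact hunion Iᶜ
  · rw [hcompl]
    exact biUnion_mono subset_rfl fun n _ => disjointed_subset E n

lemma exists_funAmb_compl_subset_subset (hα : α ≠ 0) (hU : U ∈ FunAdd X α)
    (hV : V ∈ FunAdd X α) (hUV : U ∪ V = Set.univ) :
    ∃ C, FunAmb α C ∧ Cᶜ ⊆ U ∧ C ⊆ V := by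
  obtain ⟨P, hP, rfl⟩ := exists_funAmb_seq_of_mem_funAdd hα hU
  obtain ⟨Q, hQ, rfl⟩ := exists_funAmb_seq_of_mem_funAdd hα hV
  let E : ℕ → Set X := fun n => if Even n then Q (n / 2) else P (n / 2)
  have hE : ∀ n, FunAmb α (E n) := fun n => by
    by_cases hn : Even n
    · simpa only [E, if_pos hn] using hQ _
    · simpa only [E, if_neg hn] using hP _
  have hcov : ⋃ n, E n = Set.univ := by
    refine eq_univ_of_forall fun x => ?_
    rcases (hUV ▸ mem_univ x : x ∈ (⋃ n, P n) ∪ ⋃ n, Q n) with hx | hx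
    · obtain ⟨k, hk⟩ := mem_iUnion.1 hx
      exact mem_iUnion.2 ⟨2 * k + 1, by simpa [E, Nat.mul_add_div] using hk⟩
    · obtain ⟨k, hk⟩ := mem_iUnion.1 hx
      exact mem_iUnion.2 ⟨2 * k, by simpa [E] using hk⟩
  obtain ⟨C, hC, hCQ, hCP⟩ := exists_funAmb_of_iUnion_eq_univ hα hE hcov {n | Even n}
  refine ⟨C, hC, hCP.trans (iUnion₂_subset fun n hn => ?_),
    hCQ.trans (iUnion₂_subset fun n hn => ?_)⟩
  · simp only [E, if_neg (show ¬Even n from hn)]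
    exact subset_iUnion P _
  · simp only [E, if_pos (show Even n from hn)]
    exact subset_iUnion Q _

end Reduction

theorem stmt11_general {X : Type*} [TopologicalSpace X] (α : Ordinal) (h0 : 0 < α)
    (A B : Set X) (hA : A ∈ FunMul X α) (hB : B ∈ FunMul X α) (hd : Disjoint A B) :
    ∃ C : Set X, FunAmb α C ∧ A ⊆ C ∧ C ⊆ Bᶜ := by
  have hcover : Aᶜ ∪ Bᶜ = Set.univ := by rw [← compl_inter, hd.inter_eq, compl_empty]
  obtain ⟨C, hC, hCA, hCB⟩ := exists_funAmb_compl_subset_subset h0.ne'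
    (compl_mem_funAdd_iff.2 hA) (compl_mem_funAdd_iff.2 hB) hcover
  exact ⟨C, hC, compl_subset_compl.1 hCA, hCB⟩

theorem stmt11 {X : Type*} [TopologicalSpace X] (α : Ordinal) (h0 : 0 < α) (hα : α < ω₁)
    (A B : Set X) (hA : A ∈ FunMul X α) (hB : B ∈ FunMul X α) (hd : Disjoint A B) :
    ∃ C : Set X, FunAmb α C ∧ A ⊆ C ∧ C ⊆ Bᶜ :=
  stmt11_general α h0 A B hA hB hd
end
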